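/- arXiv:1909.07093 — 3 statements merged into one kernel-verified Lean document; each statement's English description precedes it below -/
import Mathlib

section
/- Let Γ0 and Γ1 be two order-preserving strictly-upward straight-line planar drawings of a rooted ordered tree T, and let M be any upward planar morph between Γ0 and Γ1 (a sequence of linear morphing steps, each of which is planar and upward). Then every drawing occurring during M — each drawing of the sequence and each intermediate drawing of each linear step — is order-preserving. -/
open Real Set

/-- A finite rooted ordered tree: a root, a parent function (fixing the root),
well-foundedness (every node reaches the root by iterating `parent`), and a
rank function giving the left-to-right order among siblings. -/
structure OTree (V : Type) [Fintype V] [DecidableEq V] where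
  root : V
  parent : V → V
  parent_root : parent root = root
  reach : ∀ v : V, ∃ n : ℕ, parent^[n] v = root
  rank : V → ℕ
  rank_inj : ∀ u v : V, u ≠ root → v ≠ root →
    parent u = parent v → rank u = rank v → u = v

variable {V : Type} [Fintype V] [DecidableEq V]

/-- `c` is a child of `v`. -/
def OTree.IsChild (T : OTree V) (c v : V) : Prop := c ≠ T.root ∧ T.parent c = v

/-- A leaf is a node with no children. -/
def OTree.IsLeaf (T : OTree V) (v : V) : Prop := ∀ c, ¬ T.IsChild c v

/-- `a` is an ancestor of `w`, or `a = w`. -/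
def OTree.AncEq (T : OTree V) (a w : V) : Prop := ∃ n : ℕ, T.parent^[n] w = a

/-- A drawing is strictly upward if every non-root node lies strictly below its parent. -/
def IsUpwardD (T : OTree V) (Γ : V → ℝ × ℝ) : Prop :=
  ∀ v, v ≠ T.root → (Γ v).2 < (Γ (T.parent v)).2

/-- A straight-line drawing is planar if it is injective on nodes and any two distinct
edge segments meet only in (images of) shared endpoints. -/
def IsPlanarD (T : OTree V) (Γ : V → ℝ × ℝ) : Prop :=
  Function.Injective Γ ∧
  ∀ u v : V, u ≠ T.root → v ≠ T.root → u ≠ v →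
    segment ℝ (Γ u) (Γ (T.parent u)) ∩ segment ℝ (Γ v) (Γ (T.parent v)) ⊆
      Γ '' (({u, T.parent u} : Set V) ∩ {v, T.parent v})

/-- The angle of the direction from `p` to `q`. -/
noncomputable def dirAngle (p q : ℝ × ℝ) : ℝ :=
  Complex.arg (Complex.ofReal (q.1 - p.1) + Complex.ofReal (q.2 - p.2) * Complex.I)

/-- Normalization of an angle into the window `[a, a + 2π)`. -/
noncomputable def normAngle (a θ : ℝ) : ℝ := θ - 2 * π * (⌊(θ - a) / (2 * π)⌋ : ℤ)

/-- The angle of the direction from `Γ v` to `Γ w`, normalized into `[a, a + 2π)`. -/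
noncomputable def angFrom (Γ : V → ℝ × ℝ) (a : ℝ) (v w : V) : ℝ :=
  normAngle a (dirAngle (Γ v) (Γ w))

/-- A drawing is order-preserving if around every node the counterclockwise cyclic
order of the incident edges is: edge to the parent, then edges to the children in
left-to-right order. -/
def IsOrderPreservingD (T : OTree V) (Γ : V → ℝ × ℝ) : Prop :=
  ∀ v : V, ∃ a : ℝ,
    (∀ c₁ c₂ : V, T.IsChild c₁ v → T.IsChild c₂ v → T.rank c₁ < T.rank c₂ →
      angFrom Γ a v c₁ < angFrom Γ a v c₂) ∧
    (v ≠ T.root → ∀ c : V, T.IsChild c v →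
      angFrom Γ a v (T.parent v) < angFrom Γ a v c)

/-- A grid drawing places every node at integer coordinates. -/
def IsGridD (Γ : V → ℝ × ℝ) : Prop :=
  ∀ v, (∃ a : ℤ, (Γ v).1 = a) ∧ (∃ b : ℤ, (Γ v).2 = b)

/-- The width of a (grid) drawing: number of grid columns met by its bounding box. -/
noncomputable def gW (Γ : V → ℝ × ℝ) : ℝ :=
  sSup (Set.range fun v => (Γ v).1) - sInf (Set.range fun v => (Γ v).1) + 1

/-- The height of a (grid) drawing: number of grid rows met by its bounding box. -/
noncomputable def gH (Γ : V → ℝ × ℝ) : ℝ :=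
  sSup (Set.range fun v => (Γ v).2) - sInf (Set.range fun v => (Γ v).2) + 1

/-- The drawing at time `t` of the linear morph from `Γ₀` to `Γ₁`. -/
def lerpD (t : ℝ) (Γ₀ Γ₁ : V → ℝ × ℝ) : V → ℝ × ℝ :=
  fun v => (1 - t) • Γ₀ v + t • Γ₁ v

/-- The linear morph from `Γ₀` to `Γ₁` is planar. -/
def PlanarStep (T : OTree V) (Γ₀ Γ₁ : V → ℝ × ℝ) : Prop :=
  ∀ t ∈ Set.Icc (0:ℝ) 1, IsPlanarD T (lerpD t Γ₀ Γ₁)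

/-- The linear morph from `Γ₀` to `Γ₁` is upward. -/
def UpwardStep (T : OTree V) (Γ₀ Γ₁ : V → ℝ × ℝ) : Prop :=
  ∀ t ∈ Set.Icc (0:ℝ) 1, IsUpwardD T (lerpD t Γ₀ Γ₁)

/-!
In an upward drawing the children of a node lie strictly below it and its parent strictly above it,
so no edge direction at a node is horizontal: during a linear morph each direction angle varies
continuously, and two edges at a node never share a direction (for two child edges, planarity
forbids overlapping segments; a child and the parent edge point into opposite half-planes). By the
intermediate value theorem the linear order of the direction angles at every node is therefore
constant along an upward planar step. Being order-preserving only depends on this linear order, so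
it propagates from `Γ₀` along the morph, step by step.
-/

theorem IsPreconnected.lt_iff_lt_of_ne {X α : Type*} [TopologicalSpace X] [LinearOrder α]
    [TopologicalSpace α] [OrderClosedTopology α] {s : Set X} (hs : IsPreconnected s)
    {f g : X → α} (hf : ContinuousOn f s) (hg : ContinuousOn g s) (hne : ∀ x ∈ s, f x ≠ g x)
    {a b : X} (ha : a ∈ s) (hb : b ∈ s) : f a < g a ↔ f b < g b := by
  have hpropagate : ∀ {a b}, a ∈ s → b ∈ s → f a < g a → f b < g b := fun ha hb hab =>
    not_le.1 fun hba =>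
      let ⟨x, hx, hfg⟩ := hs.intermediate_value₂ ha hb hf hg hab.le hba
      hne x hx hfg
  exact ⟨hpropagate ha hb, hpropagate hb ha⟩

theorem toIcoMod_sub_toIcoMod_of_le {α : Type*} [AddCommGroup α] [LinearOrder α]
    [IsOrderedAddMonoid α] [Archimedean α] {p : α} (hp : 0 < p) {a b x : α}
    (h : toIcoMod hp a b ≤ toIcoMod hp a x) :
    toIcoMod hp a x - toIcoMod hp a b = toIcoMod hp b x - b := by
  symm
  rw [sub_eq_iff_eq_add, toIcoMod_eq_iff]
  refine ⟨⟨?_, ?_⟩, toIcoDiv hp a x - toIcoDiv hp a b, ?_⟩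
  · simpa using h
  · have : toIcoMod hp a x - toIcoMod hp a b < p := by
      rw [sub_lt_iff_lt_add']
      exact (toIcoMod_lt_right hp a x).trans_le (add_le_add_left (left_le_toIcoMod hp a b) p)
    simpa [add_comm] using add_lt_add_right this b
  · rw [sub_smul, ← self_sub_toIcoMod hp a x, ← self_sub_toIcoMod hp a b]; abel

theorem normAngle_eq_toIcoMod (a θ : ℝ) : normAngle a θ = toIcoMod two_pi_pos a θ := by
  rw [normAngle, ← self_sub_toIcoDiv_zsmul, toIcoDiv_eq_floor, zsmul_eq_mul, mul_comm]

theorem normAngle_eq_ite {b x : ℝ} (hb : b ∈ Ioc (-π) π) (hx : x ∈ Ioc (-π) π) :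
    normAngle b x = if b ≤ x then x else x + 2 * π := by
  rw [normAngle_eq_toIcoMod]
  split_ifs with h
  · exact (toIcoMod_eq_self _).2 ⟨h, by linarith [hb.1, hx.2]⟩
  · rw [← toIcoMod_add_right, toIcoMod_eq_self]
    constructor <;> linarith [hb.2, hx.1]

theorem normAngle_lt_normAngle_iff {b x y : ℝ} (hb : b ∈ Ioc (-π) π) (hx : x ∈ Ioc (-π) π)
    (hy : y ∈ Ioc (-π) π) :
    normAngle b x < normAngle b y ↔ b ≤ x ∧ y < b ∨ (b ≤ x ↔ b ≤ y) ∧ x < y := by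
  rw [normAngle_eq_ite hb hx, normAngle_eq_ite hb hy]
  split_ifs <;> grind [hx.1, hy.2]

theorem exists_normAngle_lt_iff_of_lt_iff {ι : Type*} {s : Set ι} (hs : s.Finite)
    {θ θ' : ι → ℝ} (hθ : ∀ i ∈ s, θ i ∈ Ioc (-π) π) (hθ' : ∀ i ∈ s, θ' i ∈ Ioc (-π) π)
    (hcmp : ∀ i ∈ s, ∀ j ∈ s, θ i < θ j ↔ θ' i < θ' j) (a : ℝ) :
    ∃ a', ∀ i ∈ s, ∀ j ∈ s,
      (normAngle a (θ i) < normAngle a (θ j) ↔ normAngle a' (θ' i) < normAngle a' (θ' j)) := by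
  rcases s.eq_empty_or_nonempty with rfl | hne
  · exact ⟨0, by simp⟩
  obtain ⟨i₀, hi₀, hmin⟩ := s.exists_min_image (fun i => normAngle a (θ i)) hs hne
  have hshift : ∀ i ∈ s,
      normAngle a (θ i) = normAngle (θ i₀) (θ i) + (normAngle a (θ i₀) - θ i₀) := by
    intro i hi
    have := toIcoMod_sub_toIcoMod_of_le two_pi_pos
      (by simpa only [normAngle_eq_toIcoMod] using hmin i hi)
    simp only [normAngle_eq_toIcoMod] at this ⊢
    linear_combination this
  -- Restarting the window at the first direction `θ i₀` shifts all values by one constant, and in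
  -- a window starting at `θ i₀` the order only depends on comparisons with `θ i₀`.
  refine ⟨θ' i₀, fun i hi j hj => ?_⟩
  rw [hshift i hi, hshift j hj, add_lt_add_iff_right,
    normAngle_lt_normAngle_iff (hθ i₀ hi₀) (hθ i hi) (hθ j hj),
    normAngle_lt_normAngle_iff (hθ' i₀ hi₀) (hθ' i hi) (hθ' j hj),
    ← not_lt, ← not_lt, hcmp i hi i₀ hi₀, hcmp j hj i₀ hi₀, hcmp i hi j hj]
  simp only [not_lt]

theorem dirAngle_eq_arg (p q : ℝ × ℝ) :
    dirAngle p q = Complex.arg (Complex.equivRealProdCLM.symm (q - p)) := by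
  simp [dirAngle, Complex.equivRealProdCLM_symm_apply]

theorem dirAngle_mem_Ioc (p q : ℝ × ℝ) : dirAngle p q ∈ Ioc (-π) π :=
  Complex.arg_mem_Ioc _

theorem dirAngle_neg_of_snd_lt {p q : ℝ × ℝ} (h : q.2 < p.2) : dirAngle p q < 0 := by
  simpa [dirAngle, Complex.arg_neg_iff] using h

theorem dirAngle_pos_of_snd_lt {p q : ℝ × ℝ} (h : p.2 < q.2) : 0 < dirAngle p q := by
  have him : 0 < (Complex.equivRealProdCLM.symm (q - p)).im := by
    simpa [Complex.equivRealProdCLM_symm_apply] using h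
  rw [dirAngle_eq_arg]
  exact (Complex.arg_nonneg_iff.2 him.le).lt_of_ne fun h0 =>
    him.ne' (Complex.arg_eq_zero_iff.1 h0.symm).2

theorem ContinuousOn.dirAngle {X : Type*} [TopologicalSpace X] {f g : X → ℝ × ℝ} {s : Set X}
    (hf : ContinuousOn f s) (hg : ContinuousOn g s) (h : ∀ x ∈ s, (f x).2 ≠ (g x).2) :
    ContinuousOn (fun x => _root_.dirAngle (f x) (g x)) s := by
  intro x hx
  simp only [dirAngle_eq_arg]
  refine (Complex.continuousAt_arg ?_).comp_continuousWithinAt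
    ((Complex.equivRealProdCLM.symm.continuous.comp_continuousOn (hg.sub hf)) x hx)
  rw [Complex.mem_slitPlane_iff]
  right
  simpa [Complex.equivRealProdCLM_symm_apply, sub_eq_zero] using (h x hx).symm

theorem mem_segment_or_mem_segment_of_dirAngle_eq {p q₁ q₂ : ℝ × ℝ}
    (h : dirAngle p q₁ = dirAngle p q₂) : q₁ ∈ segment ℝ p q₂ ∨ q₂ ∈ segment ℝ p q₁ := by
  have hray : SameRay ℝ (q₁ - p) (q₂ - p) := by
    rw [← SameRay.sameRay_map_iff Complex.equivRealProdLm.symm, Complex.sameRay_iff]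
    simp only [dirAngle_eq_arg] at h
    exact Or.inr (Or.inr h)
  obtain ⟨u, r₁, r₂, hr₁, hr₂, -, h₁, h₂⟩ := hray.exists_eq_smul
  rw [sub_eq_iff_eq_add] at h₁ h₂
  simp only [mem_segment_iff_wbtw, h₁, h₂, ← vadd_eq_add]
  exact wbtw_or_wbtw_smul_vadd_of_nonneg p u hr₁ hr₂

theorem continuous_lerpD {W : Type} (Γ₀ Γ₁ : W → ℝ × ℝ) (w : W) :
    Continuous fun t => lerpD t Γ₀ Γ₁ w := by
  unfold lerpD
  fun_prop

theorem lerpD_zero {W : Type} (Γ₀ Γ₁ : W → ℝ × ℝ) : lerpD 0 Γ₀ Γ₁ = Γ₀ := by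
  funext w
  simp [lerpD]

theorem lerpD_one {W : Type} (Γ₀ Γ₁ : W → ℝ × ℝ) : lerpD 1 Γ₀ Γ₁ = Γ₁ := by
  funext w
  simp [lerpD]

def OTree.Adj (T : OTree V) (v w : V) : Prop := T.IsChild w v ∨ T.IsChild v w

theorem OTree.IsChild.ne {T : OTree V} {c v : V} (h : T.IsChild c v) : c ≠ v := by
  rintro rfl
  obtain ⟨n, hn⟩ := T.reach c
  exact h.1 (by rwa [Function.iterate_fixed h.2] at hn)

section Drawing

variable {T : OTree V} {Γ : V → ℝ × ℝ}

theorem IsUpwardD.snd_ne_of_adj (h : IsUpwardD T Γ) {v w : V} (hvw : T.Adj v w) :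
    (Γ v).2 ≠ (Γ w).2 := by
  rcases hvw with ⟨hw, rfl⟩ | ⟨hv, rfl⟩
  · exact (h w hw).ne'
  · exact (h v hv).ne

theorem IsPlanarD.notMem_segment (hΓ : IsPlanarD T Γ) {v c₁ c₂ : V} (h₁ : T.IsChild c₁ v)
    (h₂ : T.IsChild c₂ v) (hne : c₁ ≠ c₂) : Γ c₁ ∉ segment ℝ (Γ v) (Γ c₂) := by
  intro hmem
  obtain ⟨u, hu, hΓu⟩ := hΓ.2 c₁ c₂ h₁.1 h₂.1 hne
    ⟨left_mem_segment ℝ _ _, by rwa [h₂.2, segment_symm]⟩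
  rw [h₁.2, h₂.2] at hu
  obtain rfl := hΓ.1 hΓu
  rcases hu.2 with h | h
  · exact hne h
  · exact h₁.ne h

theorem IsPlanarD.dirAngle_ne (hΓ : IsPlanarD T Γ) {v c₁ c₂ : V} (h₁ : T.IsChild c₁ v)
    (h₂ : T.IsChild c₂ v) (hne : c₁ ≠ c₂) : dirAngle (Γ v) (Γ c₁) ≠ dirAngle (Γ v) (Γ c₂) :=
  fun h => (mem_segment_or_mem_segment_of_dirAngle_eq h).elim
    (hΓ.notMem_segment h₁ h₂ hne) (hΓ.notMem_segment h₂ h₁ hne.symm)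

theorem dirAngle_ne_of_adj (hpl : IsPlanarD T Γ) (hup : IsUpwardD T Γ) {v x y : V}
    (hx : T.Adj v x) (hy : T.Adj v y) (hxy : x ≠ y) :
    dirAngle (Γ v) (Γ x) ≠ dirAngle (Γ v) (Γ y) := by
  rcases hx with hx | ⟨hv, rfl⟩ <;> rcases hy with hy | ⟨hv, rfl⟩
  · exact hpl.dirAngle_ne hx hy hxy
  · exact ((dirAngle_neg_of_snd_lt (hx.2 ▸ hup x hx.1)).trans
      (dirAngle_pos_of_snd_lt (hup v hv))).ne
  · exact ((dirAngle_neg_of_snd_lt (hy.2 ▸ hup y hy.1)).trans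
      (dirAngle_pos_of_snd_lt (hup v hv))).ne'
  · exact absurd rfl hxy

theorem IsOrderPreservingD.of_dirAngle_lt_iff {Γ' : V → ℝ × ℝ} (h : IsOrderPreservingD T Γ)
    (hcmp : ∀ v x y, T.Adj v x → T.Adj v y →
      (dirAngle (Γ v) (Γ x) < dirAngle (Γ v) (Γ y) ↔
        dirAngle (Γ' v) (Γ' x) < dirAngle (Γ' v) (Γ' y))) :
    IsOrderPreservingD T Γ' := by
  intro v
  obtain ⟨a, hchild, hparent⟩ := h v
  obtain ⟨a', ha'⟩ := exists_normAngle_lt_iff_of_lt_iff (Set.toFinite {w | T.Adj v w})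
    (fun w _ => dirAngle_mem_Ioc (Γ v) (Γ w)) (fun w _ => dirAngle_mem_Ioc (Γ' v) (Γ' w))
    (fun x hx y hy => hcmp v x y hx hy) a
  exact ⟨a', fun c₁ c₂ h₁ h₂ hr => (ha' c₁ (Or.inl h₁) c₂ (Or.inl h₂)).1 (hchild c₁ c₂ h₁ h₂ hr),
    fun hv c hc => (ha' _ (Or.inr ⟨hv, rfl⟩) c (Or.inl hc)).1 (hparent hv c hc)⟩

end Drawing

section Step

variable {T : OTree V} {Δ₀ Δ₁ : V → ℝ × ℝ}

theorem dirAngle_lt_iff_of_step (hpl : PlanarStep T Δ₀ Δ₁) (hup : UpwardStep T Δ₀ Δ₁)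
    {v x y : V} (hx : T.Adj v x) (hy : T.Adj v y) {t : ℝ} (ht : t ∈ Icc (0:ℝ) 1) :
    dirAngle (Δ₀ v) (Δ₀ x) < dirAngle (Δ₀ v) (Δ₀ y) ↔
      dirAngle (lerpD t Δ₀ Δ₁ v) (lerpD t Δ₀ Δ₁ x) <
        dirAngle (lerpD t Δ₀ Δ₁ v) (lerpD t Δ₀ Δ₁ y) := by
  rcases eq_or_ne x y with rfl | hxy
  · simp
  have hcont : ∀ w, T.Adj v w →
      ContinuousOn (fun s => dirAngle (lerpD s Δ₀ Δ₁ v) (lerpD s Δ₀ Δ₁ w)) (Icc 0 1) :=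
    fun w hw => (continuous_lerpD Δ₀ Δ₁ v).continuousOn.dirAngle
      (continuous_lerpD Δ₀ Δ₁ w).continuousOn fun s hs => (hup s hs).snd_ne_of_adj hw
  simpa only [lerpD_zero] using isPreconnected_Icc.lt_iff_lt_of_ne (hcont x hx) (hcont y hy)
    (fun s hs => dirAngle_ne_of_adj (hpl s hs) (hup s hs) hx hy hxy)
    (left_mem_Icc.2 zero_le_one) ht

theorem isOrderPreservingD_lerpD (h : IsOrderPreservingD T Δ₀) (hpl : PlanarStep T Δ₀ Δ₁)
    (hup : UpwardStep T Δ₀ Δ₁) {t : ℝ} (ht : t ∈ Icc (0:ℝ) 1) :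
    IsOrderPreservingD T (lerpD t Δ₀ Δ₁) :=
  h.of_dirAngle_lt_iff fun _ _ _ hx hy => dirAngle_lt_iff_of_step hpl hup hx hy ht

end Step

theorem upward_planar_morph_preserves_order_general (T : OTree V) (Γ₀ : V → ℝ × ℝ)
    (hop₀ : IsOrderPreservingD T Γ₀)
    (k : ℕ) (Δ : Fin (k + 1) → V → ℝ × ℝ)
    (hfirst : Δ 0 = Γ₀)
    (hsteps : ∀ i : Fin k, PlanarStep T (Δ i.castSucc) (Δ i.succ) ∧
      UpwardStep T (Δ i.castSucc) (Δ i.succ)) :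
    ∀ i : Fin k, ∀ t ∈ Set.Icc (0:ℝ) 1,
      IsOrderPreservingD T (lerpD t (Δ i.castSucc) (Δ i.succ)) := by
  have hΔ : ∀ i, IsOrderPreservingD T (Δ i) := Fin.induction (hfirst ▸ hop₀) fun i hi => by
    simpa only [lerpD_one] using
      isOrderPreservingD_lerpD hi (hsteps i).1 (hsteps i).2 (right_mem_Icc.2 zero_le_one)
  exact fun i _ ht => isOrderPreservingD_lerpD (hΔ i.castSucc) (hsteps i).1 (hsteps i).2 ht

/-- Let `Γ₀` and `Γ₁` be two order-preserving strictly-upward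
straight-line planar drawings of a rooted ordered tree `T`, and let
`⟨Γ₀ = Δ 0, Δ 1, …, Δ k = Γ₁⟩` be any upward planar morph between them (each linear
step is planar and upward). Then every drawing occurring during the morph — i.e.,
every intermediate drawing of every linear step, including the drawings of the
sequence themselves — is order-preserving. -/
theorem upward_planar_morph_preserves_order (T : OTree V) (Γ₀ Γ₁ : V → ℝ × ℝ)
    (hop₀ : IsOrderPreservingD T Γ₀) (hop₁ : IsOrderPreservingD T Γ₁)
    (hup₀ : IsUpwardD T Γ₀) (hup₁ : IsUpwardD T Γ₁)
    (hpl₀ : IsPlanarD T Γ₀) (hpl₁ : IsPlanarD T Γ₁)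
    (k : ℕ) (Δ : Fin (k + 1) → V → ℝ × ℝ)
    (hfirst : Δ 0 = Γ₀) (hlast : Δ (Fin.last k) = Γ₁)
    (hsteps : ∀ i : Fin k, PlanarStep T (Δ i.castSucc) (Δ i.succ) ∧
      UpwardStep T (Δ i.castSucc) (Δ i.succ)) :
    ∀ i : Fin k, ∀ t ∈ Set.Icc (0:ℝ) 1,
      IsOrderPreservingD T (lerpD t (Δ i.castSucc) (Δ i.succ)) :=
  upward_planar_morph_preserves_order_general T Γ₀ hop₀ k Δ hfirst hsteps
end

section
/- Let A, B, C be integers such that A·t² + B·t + C > 0 for every t ∈ [0,1]. Then A·t² + B·t + C ≥ 1/(4·max(A,1)) for every t ∈ [0,1]. -/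
/-!
Unless `A > 0` and the vertex `-B / (2A)` lies in `(0,1)`, the quadratic `f` is bounded below on
`[0,1]` by its endpoint values `f 0 = C` and `f 1 = A + B + C`, which are positive integers and
hence at least `1`. Otherwise `4A · f = (2At + B)² - discrim A B C ≥ -discrim A B C`, and the
integer `-discrim A B C` is positive since it equals `4A` times the value of `f` at the vertex.
-/

@[simp, norm_cast]
lemma Int.cast_discrim {R : Type*} [Ring R] (a b c : ℤ) :
    ((discrim a b c : ℤ) : R) = discrim (a : R) b c := by
  simp [discrim]

lemma four_mul_quadratic_eq {R : Type*} [CommRing R] (a b c t : R) :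
    4 * a * (a * t ^ 2 + b * t + c) = (2 * a * t + b) ^ 2 - discrim a b c := by
  rw [discrim]; ring

lemma four_mul_quadratic_vertex {K : Type*} [Field K] [NeZero (2 : K)] {a : K} (b c : K)
    (ha : a ≠ 0) :
    4 * a * (a * (-b / (2 * a)) ^ 2 + b * (-b / (2 * a)) + c) = -discrim a b c := by
  rw [four_mul_quadratic_eq]; field_simp; ring

lemma one_le_intCast_of_pos {R : Type*} [Ring R] [LinearOrder R] [IsStrictOrderedRing R] {n : ℤ}
    (h : (0 : R) < n) : (1 : R) ≤ n := by
  have hn : 0 < n := by exact_mod_cast h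
  exact_mod_cast hn

section OrderedCommRing

variable {K : Type*} [CommRing K] [LinearOrder K] [IsStrictOrderedRing K] {a b c t : K}

lemma neg_discrim_le_four_mul_quadratic (t : K) :
    -discrim a b c ≤ 4 * a * (a * t ^ 2 + b * t + c) := by
  rw [four_mul_quadratic_eq]; nlinarith [sq_nonneg (2 * a * t + b)]

lemma secant_le_quadratic_of_nonpos (ha : a ≤ 0) (ht0 : 0 ≤ t) (ht1 : t ≤ 1) :
    (1 - t) * c + t * (a + b + c) ≤ a * t ^ 2 + b * t + c := by
  nlinarith [mul_nonneg (mul_nonneg ht0 (sub_nonneg.mpr ht1)) (neg_nonneg.mpr ha)]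

lemma quadratic_at_zero_le (ha : 0 ≤ a) (hb : 0 ≤ b) (ht0 : 0 ≤ t) :
    c ≤ a * t ^ 2 + b * t + c := by
  nlinarith [mul_nonneg hb ht0, mul_nonneg ha (sq_nonneg t)]

lemma quadratic_at_one_le (ha : 0 ≤ a) (hb : b ≤ -2 * a) (ht1 : t ≤ 1) :
    a + b + c ≤ a * t ^ 2 + b * t + c := by
  have hslope : 0 ≤ -b - a * (t + 1) := by nlinarith
  nlinarith [mul_nonneg (sub_nonneg.mpr ht1) hslope]

lemma one_le_quadratic_of_vertex_not_mem_Ioo (hc : 1 ≤ c) (habc : 1 ≤ a + b + c)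
    (hv : a ≤ 0 ∨ 0 ≤ b ∨ b ≤ -2 * a) (ht0 : 0 ≤ t) (ht1 : t ≤ 1) :
    1 ≤ a * t ^ 2 + b * t + c := by
  rcases le_or_gt a 0 with ha | ha
  · nlinarith [secant_le_quadratic_of_nonpos (b := b) (c := c) ha ht0 ht1]
  rcases hv with ha' | hb | hb
  · exact (ha.not_ge ha').elim
  · exact hc.trans (quadratic_at_zero_le ha.le hb ht0)
  · exact habc.trans (quadratic_at_one_le ha.le hb ht1)

end OrderedCommRing

/-- Let `A, B, C` be integers such that `A·t² + B·t + C > 0` for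
every `t ∈ [0,1]`. Then `A·t² + B·t + C ≥ 1 / (4 · max A 1)` for every `t ∈ [0,1]`. -/
theorem integer_quadratic_positive_lower_bound (A B C : ℤ)
    (hpos : ∀ t ∈ Set.Icc (0:ℝ) 1, 0 < (A : ℝ) * t ^ 2 + (B : ℝ) * t + (C : ℝ)) :
    ∀ t ∈ Set.Icc (0:ℝ) 1,
      1 / (4 * ((max A 1 : ℤ) : ℝ)) ≤ (A : ℝ) * t ^ 2 + (B : ℝ) * t + (C : ℝ) := by
  rintro t ⟨ht0, ht1⟩
  have hC : (1 : ℝ) ≤ C := one_le_intCast_of_pos (by simpa using hpos 0 (by simp))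
  have hABC : (1 : ℝ) ≤ A + B + C := by
    exact_mod_cast one_le_intCast_of_pos (R := ℝ) (n := A + B + C)
      (by push_cast; simpa using hpos 1 (by simp))
  by_cases hv : (A : ℝ) ≤ 0 ∨ 0 ≤ (B : ℝ) ∨ (B : ℝ) ≤ -2 * A
  · refine le_trans ?_ (one_le_quadratic_of_vertex_not_mem_Ioo hC hABC hv ht0 ht1)
    exact div_le_one_of_le₀ (by push_cast; linarith [le_max_right (A : ℝ) 1]) (by positivity)
  simp only [not_or, not_le] at hv
  obtain ⟨hA, hB, hB2⟩ := hv
  have hs : -(B : ℝ) / (2 * A) ∈ Set.Icc (0 : ℝ) 1 :=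
    ⟨div_nonneg (by linarith) (by linarith), (div_le_one (by linarith)).mpr (by linarith)⟩
  have hdisc : (1 : ℝ) ≤ -discrim (A : ℝ) B C := by
    have hvertex : (0 : ℝ) < -discrim (A : ℝ) B C := by
      rw [← four_mul_quadratic_vertex _ _ hA.ne']; exact mul_pos (by linarith) (hpos _ hs)
    exact_mod_cast one_le_intCast_of_pos (R := ℝ) (n := -discrim A B C)
      (by exact_mod_cast hvertex)
  have hmax : ((max A 1 : ℤ) : ℝ) = A := by
    rw [Int.cast_max, Int.cast_one, max_eq_left]; exact_mod_cast hA
  rw [hmax, div_le_iff₀ (by linarith)]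
  linarith [neg_discrim_le_four_mul_quadratic (a := (A : ℝ)) (b := B) (c := C) t]
end

section
/- Let Γ be a planar straight-line drawing of a graph G in which every two distinct vertices are at Euclidean distance at least 2 and every vertex is at distance at least 2 from every edge segment not incident to it. Let Γ'' be the drawing obtained from Γ by moving each vertex to a nearest point with integer coordinates. Then Γ'' is a planar straight-line grid drawing of G and the linear morph ⟨Γ, Γ''⟩ is planar. -/
/-!
During the morph every vertex, and with it every point of an edge taken at a fixed parameter,
stays within `√2 / 2` of its place in `Γ`. Since distinct vertices, and a vertex and a
non-incident edge, are at distance at least `2 > √2` in `Γ`, they never meet, and two edges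
sharing an endpoint can then only meet there. For vertex-disjoint edges one needs that two
disjoint plane segments are at least as far apart as the nearest endpoint-to-segment distance:
the difference of their points is affine in the two parameters, and from any pair of parameters
one can walk to the boundary of the parameter square in a direction along which this
difference either stays constant or shrinks towards zero.
-/

open Set

variable {V : Type} [Fintype V] [DecidableEq V]

/-- The straight-line segment representing the edge `uv` in the drawing `Γ`. -/
def gSeg (Γ : V → EuclideanSpace ℝ (Fin 2)) (u v : V) : Set (EuclideanSpace ℝ (Fin 2)) :=
  segment ℝ (Γ u) (Γ v)

/-- A straight-line drawing of a graph is planar if it is injective on vertices and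
any two distinct edge segments meet only in (images of) shared endpoints. -/
def GPlanar (G : SimpleGraph V) (Γ : V → EuclideanSpace ℝ (Fin 2)) : Prop :=
  Function.Injective Γ ∧
  ∀ u v u' v' : V, G.Adj u v → G.Adj u' v' →
    ¬ (u = u' ∧ v = v') → ¬ (u = v' ∧ v = u') →
    gSeg Γ u v ∩ gSeg Γ u' v' ⊆ Γ '' (({u, v} : Set V) ∩ {u', v'})

/-- A grid drawing places every vertex at integer coordinates. -/
def GGrid (Γ : V → EuclideanSpace ℝ (Fin 2)) : Prop :=
  ∀ v, (∃ a : ℤ, Γ v 0 = a) ∧ (∃ b : ℤ, Γ v 1 = b)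

/-- The set of distances between pairs of geometric objects of a drawing:
distances between pairs of distinct vertices, and distances between a vertex and a
non-incident edge segment. -/
def resDistSet (G : SimpleGraph V) (Γ : V → EuclideanSpace ℝ (Fin 2)) : Set ℝ :=
  {d | (∃ u v : V, u ≠ v ∧ d = dist (Γ u) (Γ v)) ∨
       (∃ u v w : V, G.Adj u v ∧ w ≠ u ∧ w ≠ v ∧
          d = Metric.infDist (Γ w) (gSeg Γ u v))}

/-- The resolution of a drawing: the ratio between the largest and the smallest
distance between a pair of geometric objects of the drawing. -/
noncomputable def resolution (G : SimpleGraph V) (Γ : V → EuclideanSpace ℝ (Fin 2)) : ℝ :=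
  sSup (resDistSet G Γ) / sInf (resDistSet G Γ)

/-- The drawing at time `t` of the linear morph from `Γ₀` to `Γ₁`. -/
noncomputable def glerp (t : ℝ) (Γ₀ Γ₁ : V → EuclideanSpace ℝ (Fin 2)) :
    V → EuclideanSpace ℝ (Fin 2) :=
  fun v => (1 - t) • Γ₀ v + t • Γ₁ v

/-- The linear morph from `Γ₀` to `Γ₁` is planar. -/
def GPlanarStep (G : SimpleGraph V) (Γ₀ Γ₁ : V → EuclideanSpace ℝ (Fin 2)) : Prop :=
  ∀ t ∈ Set.Icc (0:ℝ) 1, GPlanar G (glerp t Γ₀ Γ₁)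

/-- A point of the Euclidean plane with integer coordinates. -/
def IsIntPoint (q : EuclideanSpace ℝ (Fin 2)) : Prop :=
  (∃ a : ℤ, q 0 = a) ∧ (∃ b : ℤ, q 1 = b)

open Module AffineMap

theorem IsPreconnected.inter_frontier_nonempty {X : Type*} [TopologicalSpace X] {s t : Set X}
    (hs : IsPreconnected s) (hst : (s ∩ t).Nonempty) (hts : (s \ t).Nonempty) :
    (s ∩ frontier t).Nonempty := by
  have hcover : s ⊆ closure t ∪ (interior t)ᶜ := fun x _ => by
    by_cases hx : x ∈ interior t
    exacts [Or.inl (subset_closure (interior_subset hx)), Or.inr hx]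
  rw [frontier_eq_closure_inter_closure, closure_compl]
  exact isPreconnected_closed_iff.1 hs _ _ isClosed_closure isOpen_interior.isClosed_compl hcover
    (hst.mono (inter_subset_inter_right _ subset_closure))
    (hts.mono (inter_subset_inter_right _ (compl_subset_compl.2 interior_subset)))

theorem segment_inter_segment_subset_singleton {E : Type*} [AddCommGroup E] [Module ℝ E]
    {a b c : E} (hc : c ∉ segment ℝ a b) (hb : b ∉ segment ℝ a c) :
    segment ℝ a b ∩ segment ℝ a c ⊆ {a} := by
  rintro x ⟨hxb, hxc⟩
  rw [segment_eq_image'] at hxb hxc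
  obtain ⟨s, hs, rfl⟩ := hxb
  obtain ⟨s', hs', hx : a + s' • (c - a) = a + s • (b - a)⟩ := hxc
  by_contra hxa
  replace hxa : a + s • (b - a) ≠ a := hxa
  have hs0 : s ≠ 0 := by rintro rfl; simp at hxa
  have hs0' : s' ≠ 0 := by rintro rfl; rw [zero_smul, add_zero] at hx; exact hxa hx.symm
  -- both `b` and `c` lie on the ray from `a` through `x`, so one lies between `a` and the other
  have hb' : b = s⁻¹ • (s • (b - a)) +ᵥ a := by
    rw [inv_smul_smul₀ hs0, vadd_eq_add, sub_add_cancel]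
  have hc' : c = s'⁻¹ • (s • (b - a)) +ᵥ a := by
    rw [← add_left_cancel hx, inv_smul_smul₀ hs0', vadd_eq_add, sub_add_cancel]
  rcases wbtw_or_wbtw_smul_vadd_of_nonneg a (s • (b - a)) (inv_nonneg.2 hs.1)
    (inv_nonneg.2 hs'.1) with h | h
  · rw [← hb', ← hc'] at h
    exact hb h.mem_segment
  · rw [← hb', ← hc'] at h
    exact hc h.mem_segment

section Segments

variable {E : Type*} [NormedAddCommGroup E] [NormedSpace ℝ E]

theorem exists_mem_segment_dist_le {a b a' b' x : E} {M : ℝ} (ha : dist a' a ≤ M)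
    (hb : dist b' b ≤ M) (hx : x ∈ segment ℝ a' b') : ∃ y ∈ segment ℝ a b, dist x y ≤ M := by
  rw [segment_eq_image_lineMap] at hx
  obtain ⟨t, ht, rfl⟩ := hx
  refine ⟨lineMap a b t, lineMap_mem_segment ℝ a b ht, ?_⟩
  simp only [lineMap_apply_module]
  calc dist ((1 - t) • a' + t • b') ((1 - t) • a + t • b)
      ≤ dist ((1 - t) • a') ((1 - t) • a) + dist (t • b') (t • b) := dist_add_add_le _ _ _ _
    _ = (1 - t) * dist a' a + t * dist b' b := by
      rw [dist_smul₀, dist_smul₀, Real.norm_of_nonneg (sub_nonneg.2 ht.2),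
        Real.norm_of_nonneg ht.1]
    _ ≤ (1 - t) * M + t * M := by gcongr <;> linarith [ht.1, ht.2]
    _ = M := by ring

variable [FiniteDimensional ℝ E]

theorem AffineMap.exists_mem_frontier_norm_le {P : Type*} [NormedAddCommGroup P]
    [NormedSpace ℝ P] [FiniteDimensional ℝ P] (φ : P →ᵃ[ℝ] E)
    (hdim : finrank ℝ E ≤ finrank ℝ P) {K : Set P} (hK : Bornology.IsBounded K)
    (hφK : ∀ z ∈ K, φ z ≠ 0) {z : P} (hz : z ∈ K) : ∃ w ∈ frontier K, ‖φ w‖ ≤ ‖φ z‖ := by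
  have hφ : ∀ x y : P, φ (x + y) = φ x + φ.linear y := fun x y => by
    rw [add_comm x y, ← vadd_eq_add, φ.map_vadd, vadd_eq_add, add_comm]
  -- Either `φ` is constant along some direction, or its linear part is onto and `φ` vanishes
  -- somewhere on a line through `z`; in both cases `‖φ‖` does not grow on the way out of `K`.
  obtain ⟨v, hvK, hv⟩ : ∃ v ∉ K, ∀ w ∈ segment ℝ z v, ‖φ w‖ ≤ ‖φ z‖ := by
    by_cases hinj : Function.Injective φ.linear
    · obtain ⟨u, hu⟩ := (LinearMap.injective_iff_surjective_of_finrank_eq_finrank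
        (le_antisymm (LinearMap.finrank_le_finrank_of_injective hinj) hdim)).1 hinj (-φ z)
      refine ⟨z + u, fun h => hφK _ h (by rw [hφ, hu, add_neg_cancel]), ?_⟩
      rintro _ ⟨α, θ, hα, hθ, hαθ, rfl⟩
      have : α • z + θ • (z + u) = z + θ • u := by
        rw [smul_add, ← add_assoc, ← add_smul, hαθ, one_smul]
      have hα' : α = 1 - θ := eq_sub_of_add_eq hαθ
      rw [this, hφ, map_smul, hu, show φ z + θ • -φ z = α • φ z by rw [hα']; module, norm_smul,
        Real.norm_of_nonneg hα]
      exact mul_le_of_le_one_left (norm_nonneg _) (by linarith)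
    · obtain ⟨u, hu, hu0⟩ : ∃ u, φ.linear u = 0 ∧ u ≠ 0 := by
        simpa [injective_iff_map_eq_zero] using hinj
      obtain ⟨C, hC⟩ := hK.subset_closedBall z
      obtain ⟨R, hR⟩ : ∃ R : ℝ, C < ‖R • u‖ := ⟨(|C| + 1) / ‖u‖, by
        rw [norm_smul, Real.norm_of_nonneg (by positivity),
          div_mul_cancel₀ _ (norm_ne_zero_iff.2 hu0)]
        linarith [le_abs_self C]⟩
      refine ⟨z + R • u, fun h => ?_, ?_⟩
      · have := hC h
        rw [Metric.mem_closedBall, dist_eq_norm, add_sub_cancel_left] at this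
        linarith
      · rintro _ ⟨α, θ, -, -, hαθ, rfl⟩
        have : α • z + θ • (z + R • u) = z + (θ * R) • u := by
          rw [smul_add, ← add_assoc, ← add_smul, hαθ, one_smul, mul_smul]
        rw [this, hφ, map_smul, hu, smul_zero, add_zero]
  obtain ⟨w, hws, hwK⟩ := (convex_segment z v).isPreconnected.inter_frontier_nonempty
    ⟨z, left_mem_segment _ _ _, hz⟩ ⟨v, right_mem_segment _ _ _, hvK⟩
  exact ⟨w, hwK, hv w hws⟩

theorem le_dist_of_mem_segment_of_disjoint (hE : finrank ℝ E ≤ 2) {a b c d p q : E} {r : ℝ}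
    (hdisj : Disjoint (segment ℝ a b) (segment ℝ c d))
    (ha : ∀ y ∈ segment ℝ c d, r ≤ dist a y) (hb : ∀ y ∈ segment ℝ c d, r ≤ dist b y)
    (hc : ∀ x ∈ segment ℝ a b, r ≤ dist x c) (hd : ∀ x ∈ segment ℝ a b, r ≤ dist x d)
    (hp : p ∈ segment ℝ a b) (hq : q ∈ segment ℝ c d) : r ≤ dist p q := by
  rw [segment_eq_image_lineMap] at hp hq
  obtain ⟨s, hs, rfl⟩ := hp
  obtain ⟨s', hs', rfl⟩ := hq
  set φ : ℝ × ℝ →ᵃ[ℝ] E := (lineMap a b).comp AffineMap.fst - (lineMap c d).comp AffineMap.snd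
  have hφ : ∀ z : ℝ × ℝ, ‖φ z‖ = dist (lineMap a b z.1) (lineMap c d z.2) :=
    fun z => (dist_eq_norm _ _).symm
  obtain ⟨⟨t, t'⟩, hw, hle⟩ := φ.exists_mem_frontier_norm_le (by simpa using hE)
    (isCompact_Icc.prod isCompact_Icc).isBounded
    (fun z hz h0 => disjoint_iff_forall_ne.1 hdisj (lineMap_mem_segment ℝ a b hz.1)
      (lineMap_mem_segment ℝ c d hz.2) (sub_eq_zero.1 h0)) (mk_mem_prod hs hs')
  rw [hφ, hφ] at hle
  refine le_trans ?_ hle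
  rw [frontier_prod_eq, frontier_Icc zero_le_one, closure_Icc] at hw
  rcases hw with ⟨ht, rfl | rfl⟩ | ⟨rfl | rfl, ht'⟩
  · simpa using hc _ (lineMap_mem_segment ℝ a b ht)
  · simpa using hd _ (lineMap_mem_segment ℝ a b ht)
  · simpa using ha _ (lineMap_mem_segment ℝ c d ht')
  · simpa using hb _ (lineMap_mem_segment ℝ c d ht')

end Segments

section Drawing

variable {W : Type} {G : SimpleGraph W} {Γ Δ : W → EuclideanSpace ℝ (Fin 2)}

theorem gSeg_comm (Γ : W → EuclideanSpace ℝ (Fin 2)) (u v : W) : gSeg Γ u v = gSeg Γ v u :=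
  segment_symm ℝ _ _

theorem GPlanar.disjoint_gSeg (hΓ : GPlanar G Γ) {u v u' v' : W} (h : G.Adj u v)
    (h' : G.Adj u' v') (huu' : u ≠ u') (huv' : u ≠ v') (hvu' : v ≠ u') (hvv' : v ≠ v') :
    Disjoint (gSeg Γ u v) (gSeg Γ u' v') := by
  rw [Set.disjoint_iff]
  intro x hx
  obtain ⟨w, ⟨hwuv, hwuv'⟩, -⟩ :=
    hΓ.2 u v u' v' h h' (fun e => huu' e.1) (fun e => huv' e.1) hx
  simp only [mem_insert_iff, mem_singleton_iff] at hwuv hwuv'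
  rcases hwuv with rfl | rfl <;> rcases hwuv' with rfl | rfl <;> contradiction

theorem GPlanar.of_injective (hinj : Function.Injective Δ)
    (hshared : ∀ a z z', G.Adj a z → G.Adj a z' → z ≠ z' → gSeg Δ a z ∩ gSeg Δ a z' ⊆ {Δ a})
    (hdisj : ∀ u v u' v', G.Adj u v → G.Adj u' v' → u ≠ u' → u ≠ v' → v ≠ u' → v ≠ v' →
      Disjoint (gSeg Δ u v) (gSeg Δ u' v')) :
    GPlanar G Δ := by
  refine ⟨hinj, fun u v u' v' h h' hne hne' x hx => ?_⟩
  rcases eq_or_ne u u' with rfl | huu'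
  · have := hshared u v v' h h' (fun e => hne ⟨rfl, e⟩) hx
    exact ⟨u, by simp, this.symm⟩
  rcases eq_or_ne u v' with rfl | huv'
  · rw [gSeg_comm Δ u'] at hx
    have := hshared u v u' h h'.symm (fun e => hne' ⟨rfl, e⟩) hx
    exact ⟨u, by simp, this.symm⟩
  rcases eq_or_ne v u' with rfl | hvu'
  · rw [gSeg_comm Δ u] at hx
    have := hshared v u v' h.symm h' (fun e => hne' ⟨e, rfl⟩) hx
    exact ⟨v, by simp, this.symm⟩
  rcases eq_or_ne v v' with rfl | hvv'
  · rw [gSeg_comm Δ u, gSeg_comm Δ u'] at hx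
    have := hshared v u u' h.symm h'.symm (fun e => hne ⟨e, rfl⟩) hx
    exact ⟨v, by simp, this.symm⟩
  exact (Set.disjoint_left.1 (hdisj u v u' v' h h' huu' huv' hvu' hvv') hx.1 hx.2).elim

theorem GPlanar.of_forall_dist_le (hΓ : GPlanar G Γ) {r M : ℝ}
    (hvv : ∀ u v, u ≠ v → r ≤ dist (Γ u) (Γ v))
    (hve : ∀ w u v, G.Adj u v → w ≠ u → w ≠ v → r ≤ Metric.infDist (Γ w) (gSeg Γ u v))
    (hM : 2 * M < r) (hΔ : ∀ v, dist (Δ v) (Γ v) ≤ M) : GPlanar G Δ := by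
  have hsep : ∀ w u v, G.Adj u v → w ≠ u → w ≠ v → ∀ x ∈ gSeg Γ u v, r ≤ dist (Γ w) x :=
    fun w u v h hu hv x hx => (hve w u v h hu hv).trans (Metric.infDist_le_dist_of_mem hx)
  have hnear : ∀ u v, ∀ x ∈ gSeg Δ u v, ∃ y ∈ gSeg Γ u v, dist x y ≤ M :=
    fun u v x hx => exists_mem_segment_dist_le (hΔ u) (hΔ v) hx
  have hnot_mem : ∀ w u v, G.Adj u v → w ≠ u → w ≠ v → Δ w ∉ gSeg Δ u v := by
    intro w u v h hu hv hw
    obtain ⟨y, hy, hwy⟩ := hnear u v _ hw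
    linarith [hsep w u v h hu hv y hy, dist_triangle (Γ w) (Δ w) y, dist_comm (Γ w) (Δ w), hΔ w]
  refine GPlanar.of_injective (fun u v huv => ?_) (fun a z z' h h' hzz' => ?_)
    (fun u v u' v' h h' huu' huv' hvu' hvv' => Set.disjoint_left.2 fun x hx hx' => ?_)
  · by_contra hne
    have h0 : dist (Δ u) (Δ v) = 0 := by rw [huv, dist_self]
    linarith [hvv u v hne, dist_triangle4 (Γ u) (Δ u) (Δ v) (Γ v), dist_comm (Γ u) (Δ u),
      hΔ u, hΔ v]
  · exact segment_inter_segment_subset_singleton (hnot_mem z' a z h h'.ne' hzz'.symm)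
      (hnot_mem z a z' h' h.ne' hzz')
  · obtain ⟨y, hy, hxy⟩ := hnear u v x hx
    obtain ⟨y', hy', hxy'⟩ := hnear u' v' x hx'
    have := le_dist_of_mem_segment_of_disjoint finrank_euclideanSpace_fin.le
      (hΓ.disjoint_gSeg h h' huu' huv' hvu' hvv') (hsep u u' v' h' huu' huv')
      (hsep v u' v' h' hvu' hvv')
      (fun x hx => (hsep u' u v h huu'.symm hvu'.symm x hx).trans_eq (dist_comm _ _))
      (fun x hx => (hsep v' u v h huv'.symm hvv'.symm x hx).trans_eq (dist_comm _ _)) hy hy'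
    linarith [dist_triangle y x y', dist_comm y x]

theorem dist_glerp_le {t : ℝ} (ht : t ∈ Icc (0:ℝ) 1) (Γ₀ Γ₁ : W → EuclideanSpace ℝ (Fin 2))
    (v : W) : dist (glerp t Γ₀ Γ₁ v) (Γ₀ v) ≤ dist (Γ₀ v) (Γ₁ v) := by
  have : glerp t Γ₀ Γ₁ v = lineMap (Γ₀ v) (Γ₁ v) t := (lineMap_apply_module _ _ _).symm
  rw [this, dist_lineMap_left, Real.norm_of_nonneg ht.1]
  exact mul_le_of_le_one_left dist_nonneg ht.2

theorem glerp_one (Γ₀ Γ₁ : W → EuclideanSpace ℝ (Fin 2)) : glerp 1 Γ₀ Γ₁ = Γ₁ := by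
  ext1 v
  simp [glerp]

end Drawing

theorem dist_le_sqrt_two_div_two_of_forall_isIntPoint {p q : EuclideanSpace ℝ (Fin 2)}
    (hq : ∀ q', IsIntPoint q' → dist p q ≤ dist p q') : dist p q ≤ √2 / 2 := by
  set q' : EuclideanSpace ℝ (Fin 2) := WithLp.toLp 2 fun i => (round (p i) : ℝ)
  have hcoord : ∀ i, dist (p i) (q' i) ^ 2 ≤ 1 / 4 := fun i => by
    have h : dist (p i) (q' i) ≤ 1 / 2 := abs_sub_round (p i)
    nlinarith [dist_nonneg (x := p i) (y := q' i)]
  have hsq : (√2 / 2) ^ 2 = 1 / 2 := by rw [div_pow, Real.sq_sqrt zero_le_two]; norm_num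
  refine (hq q' ⟨⟨round (p 0), rfl⟩, ⟨round (p 1), rfl⟩⟩).trans ?_
  rw [EuclideanSpace.dist_eq, Fin.sum_univ_two, Real.sqrt_le_left (by positivity), hsq]
  linarith [hcoord 0, hcoord 1]

/-- Let `Γ` be a planar straight-line drawing of a graph `G` in
which every two distinct vertices are at distance at least `2` and every vertex is at
distance at least `2` from every edge segment not incident to it. Let `Γ''` be
obtained from `Γ` by moving each vertex to a nearest point with integer coordinates.
Then `Γ''` is a planar straight-line grid drawing of `G` and the linear morph
`⟨Γ, Γ''⟩` is planar. -/
theorem snap_to_grid_planar (G : SimpleGraph V) (Γ Γ'' : V → EuclideanSpace ℝ (Fin 2))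
    (hpl : GPlanar G Γ)
    (hvv : ∀ u v : V, u ≠ v → 2 ≤ dist (Γ u) (Γ v))
    (hve : ∀ w u v : V, G.Adj u v → w ≠ u → w ≠ v →
      2 ≤ Metric.infDist (Γ w) (gSeg Γ u v))
    (hint : ∀ v, IsIntPoint (Γ'' v))
    (hnearest : ∀ v (q : EuclideanSpace ℝ (Fin 2)), IsIntPoint q →
      dist (Γ v) (Γ'' v) ≤ dist (Γ v) q) :
    GGrid Γ'' ∧ GPlanar G Γ'' ∧ GPlanarStep G Γ Γ'' := by
  have hsnap : ∀ v, dist (Γ v) (Γ'' v) ≤ √2 / 2 :=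
    fun v => dist_le_sqrt_two_div_two_of_forall_isIntPoint (hnearest v)
  have hM : 2 * (√2 / 2) < 2 := by
    nlinarith [Real.sq_sqrt (zero_le_two (α := ℝ)), Real.sqrt_nonneg 2]
  have hstep : GPlanarStep G Γ Γ'' := fun t ht =>
    hpl.of_forall_dist_le hvv hve hM fun v => (dist_glerp_le ht Γ Γ'' v).trans (hsnap v)
  exact ⟨hint, glerp_one Γ Γ'' ▸ hstep 1 ⟨zero_le_one, le_rfl⟩, hstep⟩
end
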